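/- The set F = {z ∈ H : 0 < Re z < 1, |z| > 1, |z-1| > 1} is a fundamental domain for PSL(2,ℤ) acting on the upper half plane H. -/

import Mathlib

/-- Möbius action of an integral special linear matrix on ℂ. -/
noncomputable def moebiusZ (g : Matrix.SpecialLinearGroup (Fin 2) ℤ) (z : ℂ) : ℂ :=
  (((g : Matrix (Fin 2) (Fin 2) ℤ) 0 0 : ℂ) * z + ((g : Matrix (Fin 2) (Fin 2) ℤ) 0 1 : ℂ)) /
    (((g : Matrix (Fin 2) (Fin 2) ℤ) 1 0 : ℂ) * z + ((g : Matrix (Fin 2) (Fin 2) ℤ) 1 1 : ℂ))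

/-!
For `z ∈ F` and integers `c ≠ 0`, `d` we have `‖c z + d‖ > 1`: for `|c| ≥ 2` because `Im z > 1/2`,
and for `c = ±1` because `F` lies outside every unit disc centred at an integer. If
`g = !![a, b; c, d]` maps `z ∈ F` to `w ∈ F` with `c ≠ 0`, then `(-c w + a) (c z + d) = 1`
contradicts this; if `c = 0`, then `g = ±Tⁿ` translates by `n`, and the strip `0 < Re < 1`
forces `n = 0`. Every orbit meets Mathlib's fundamental domain `𝒟 = {|z| ≥ 1, |Re z| ≤ 1/2}`,
whose right half lies in the closure of `F`, and whose left half does after applying `T`.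
-/

open Complex ModularGroup Matrix.SpecialLinearGroup
open scoped MatrixGroups

namespace ModularStrip

def domainF : Set ℂ := {z : ℂ | 0 < z.im ∧ 0 < z.re ∧ z.re < 1 ∧ 1 < ‖z‖ ∧ 1 < ‖z - 1‖}

lemma one_lt_norm_iff (z : ℂ) : 1 < ‖z‖ ↔ 1 < z.re ^ 2 + z.im ^ 2 := by
  rw [← one_lt_sq_iff₀ (norm_nonneg z), Complex.sq_norm, normSq_apply]
  ring_nf

lemma mem_domainF_iff {z : ℂ} : z ∈ domainF ↔ 0 < z.im ∧ 0 < z.re ∧ z.re < 1 ∧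
    1 < z.re ^ 2 + z.im ^ 2 ∧ 1 < (z.re - 1) ^ 2 + z.im ^ 2 := by
  simp only [domainF, Set.mem_ofPred_eq, one_lt_norm_iff, sub_re, sub_im, one_re, one_im, sub_zero]

lemma isOpen_domainF : IsOpen domainF := by
  simp only [domainF, Set.ofPred_and]
  apply_rules [IsOpen.inter, isOpen_lt] <;> fun_prop

lemma half_lt_im_of_mem_domainF {z : ℂ} (hz : z ∈ domainF) : 1 / 2 < z.im := by
  obtain ⟨him, hre₀, hre₁, h₀, h₁⟩ := mem_domainF_iff.mp hz
  nlinarith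

lemma add_mul_I_mem_domainF {z : ℂ} (hz : z ∈ domainF) {t : ℝ} (ht : 0 ≤ t) :
    z + t * I ∈ domainF := by
  obtain ⟨him, hre₀, hre₁, h₀, h₁⟩ := mem_domainF_iff.mp hz
  rw [mem_domainF_iff]
  simp only [add_re, add_im, mul_re, mul_im, ofReal_re, ofReal_im, I_re, I_im]
  refine ⟨by linarith, by linarith, by linarith, by nlinarith, by nlinarith⟩

lemma isConnected_domainF : IsConnected domainF := by
  set L : Set ℂ := {w | 0 < w.re} ∩ {w | w.re < 1} ∩ {w | 1 < w.im}
  have hL : L ⊆ domainF := by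
    rintro w ⟨⟨h₀ : 0 < w.re, h₁ : w.re < 1⟩, h₂ : 1 < w.im⟩
    exact mem_domainF_iff.mpr ⟨by linarith, h₀, h₁, by nlinarith, by nlinarith⟩
  have hLconv : Convex ℝ L :=
    ((convex_halfSpace_re_gt 0).inter (convex_halfSpace_re_lt 1)).inter (convex_halfSpace_im_gt 1)
  have hx : (1 / 2 + 2 * I : ℂ) ∈ L := by refine ⟨⟨?_, ?_⟩, ?_⟩ <;> norm_num
  refine ⟨⟨_, hL hx⟩, isPreconnected_of_forall (1 / 2 + 2 * I) fun y hy ↦ ?_⟩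
  set ray := (fun t : ℝ ↦ y + t * I) '' Set.Icc 0 2
  obtain ⟨him, hre₀, hre₁, -⟩ := mem_domainF_iff.mp hy
  have hyL : y + (2 : ℝ) * I ∈ L := by
    refine ⟨⟨?_, ?_⟩, ?_⟩ <;> simp <;> linarith
  refine ⟨ray ∪ L, Set.union_subset ?_ hL, Or.inr hx, Or.inl ⟨0, by simp⟩, ?_⟩
  · rintro _ ⟨t, ht, rfl⟩
    exact add_mul_I_mem_domainF hy ht.1
  · exact (isPreconnected_Icc.image _ (by fun_prop)).union _ ⟨2, by simp, rfl⟩ hyL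
      hLconv.isPreconnected

/-- `‖(1 - θ) p + θ q‖² > 1` for `p = x + y i` and `q = 1/2 + (y + 1) i`, in coordinates. -/
lemma one_lt_sq_add_sq_of_mem_openSegment {x y θ : ℝ} (hx₀ : 0 ≤ x) (hx₁ : x ≤ 1) (hy : 0 < y)
    (hθ₀ : 0 < θ) (hθ₁ : θ < 1) (h₀ : 1 ≤ x ^ 2 + y ^ 2) (h₁ : 1 ≤ (x - 1) ^ 2 + y ^ 2) :
    1 < ((1 - θ) * x + θ / 2) ^ 2 + (y + θ) ^ 2 := by
  have hy' : y ^ 2 < (y + θ) ^ 2 := by nlinarith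
  rcases le_total x (1 / 2) with hx | hx
  · nlinarith [mul_nonneg hθ₀.le (by linarith : (0 : ℝ) ≤ 1 / 2 - x)]
  · nlinarith [mul_nonneg hθ₀.le (by linarith : (0 : ℝ) ≤ 1 - x)]

lemma mem_closure_domainF {p : ℂ} (h_im : 0 < p.im) (hre₀ : 0 ≤ p.re) (hre₁ : p.re ≤ 1)
    (h₀ : 1 ≤ p.re ^ 2 + p.im ^ 2) (h₁ : 1 ≤ (p.re - 1) ^ 2 + p.im ^ 2) :
    p ∈ closure domainF := by
  set q : ℂ := 1 / 2 + (p.im + 1) * I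
  have hseg : openSegment ℝ p q ⊆ domainF := by
    rw [openSegment_eq_image]
    rintro _ ⟨θ, ⟨hθ₀, hθ₁⟩, rfl⟩
    have hre : ((1 - θ) • p + θ • q).re = (1 - θ) * p.re + θ / 2 := by simp [q]; ring
    have him : ((1 - θ) • p + θ • q).im = p.im + θ := by simp [q]; ring
    have hsymm : ((1 - θ) * p.re + θ / 2 - 1) ^ 2 = ((1 - θ) * (1 - p.re) + θ / 2) ^ 2 := by ring
    rw [mem_domainF_iff, hre, him, hsymm]
    refine ⟨by linarith, by nlinarith, by nlinarith,
      one_lt_sq_add_sq_of_mem_openSegment hre₀ hre₁ h_im hθ₀ hθ₁ h₀ h₁,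
      one_lt_sq_add_sq_of_mem_openSegment (by linarith) (by linarith) h_im hθ₀ hθ₁
        (by nlinarith) (by nlinarith)⟩
  have hp : p ∈ closure (openSegment ℝ p q) := by
    rw [closure_openSegment]
    exact left_mem_segment ℝ p q
  exact closure_mono hseg hp

lemma one_lt_norm_add_intCast {z : ℂ} (hz : z ∈ domainF) (n : ℤ) : 1 < ‖z + n‖ := by
  obtain ⟨-, hre₀, hre₁, h₀, h₁⟩ := hz
  rcases lt_trichotomy n (-1) with hn | rfl | hn
  · have : (n : ℝ) ≤ -2 := by exact_mod_cast (by omega : n ≤ -2)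
    calc (1 : ℝ) < -(z + n).re := by simp; linarith
      _ ≤ ‖z + n‖ := (neg_le_abs _).trans (abs_re_le_norm _)
  · simpa [← sub_eq_add_neg] using h₁
  rcases eq_or_lt_of_le (show 0 ≤ n by omega) with rfl | hn
  · simpa using h₀
  · have : (1 : ℝ) ≤ n := by exact_mod_cast hn
    calc (1 : ℝ) < (z + n).re := by simp; linarith
      _ ≤ ‖z + n‖ := re_le_norm _

lemma one_lt_norm_intCast_mul_add {z : ℂ} (hz : z ∈ domainF) {c : ℤ} (hc : c ≠ 0) (d : ℤ) :
    1 < ‖(c : ℂ) * z + d‖ := by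
  by_cases hunit : c = 1 ∨ c = -1
  · rcases hunit with rfl | rfl
    · simpa using one_lt_norm_add_intCast hz d
    · have : ((-1 : ℤ) : ℂ) * z + d = -(z + (-d : ℤ)) := by push_cast; ring
      rw [this, norm_neg]
      exact one_lt_norm_add_intCast hz (-d)
  · have hc₂ : (2 : ℝ) ≤ |(c : ℝ)| := by
      rw [← Int.cast_abs]
      exact_mod_cast (le_abs.mpr (by omega) : 2 ≤ |c|)
    have him := half_lt_im_of_mem_domainF hz
    calc (1 : ℝ) < 2 * z.im := by linarith
      _ ≤ |(c : ℝ)| * z.im := by gcongr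
      _ = |((c : ℂ) * z + d).im| := by simp [abs_mul, abs_of_pos hz.1]
      _ ≤ ‖(c : ℂ) * z + d‖ := abs_im_le_norm _

lemma eq_zero_of_add_intCast_mem_domainF {z : ℂ} (hz : z ∈ domainF) {n : ℤ}
    (hzn : z + n ∈ domainF) : n = 0 := by
  obtain ⟨-, hre₀, hre₁, -⟩ := hz
  obtain ⟨-, hre₀', hre₁', -⟩ := hzn
  simp only [add_re, intCast_re] at hre₀' hre₁'
  have h₁ : n < 1 := by exact_mod_cast (by linarith : (n : ℝ) < 1)
  have h₂ : -1 < n := by exact_mod_cast (by linarith : (-1 : ℝ) < n)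
  omega

lemma moebiusZ_neg (g : SL(2, ℤ)) (z : ℂ) : moebiusZ (-g) z = moebiusZ g z := by
  simp only [moebiusZ, coe_neg, Matrix.neg_apply, Int.cast_neg]
  rw [← neg_div_neg_eq]
  ring_nf

lemma moebiusZ_T_zpow (n : ℤ) (z : ℂ) : moebiusZ (T ^ n) z = z + n := by
  simp [moebiusZ, coe_T_zpow]

lemma exists_eq_T_zpow_or_neg_of_c_eq_zero {g : SL(2, ℤ)} (hc : g 1 0 = 0) :
    ∃ n : ℤ, g = T ^ n ∨ g = -T ^ n := by
  have had : g 0 0 * g 1 1 = 1 := by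
    have := g.det_coe
    rw [Matrix.det_fin_two, hc] at this
    lia
  rcases Int.eq_one_or_neg_one_of_mul_eq_one' had with ⟨ha, hd⟩ | ⟨ha, hd⟩
  · refine ⟨g 0 1, Or.inl ?_⟩
    ext i j; fin_cases i <;> fin_cases j <;> simp [ha, hc, hd, coe_T_zpow]
  · refine ⟨-g 0 1, Or.inr ?_⟩
    ext i j; fin_cases i <;> fin_cases j <;> simp [ha, hc, hd, coe_T_zpow]

lemma neg_mul_moebiusZ_add {g : SL(2, ℤ)} {z : ℂ} (hden : (g 1 0 : ℂ) * z + g 1 1 ≠ 0) :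
    -(g 1 0 : ℂ) * moebiusZ g z + g 0 0 = ((g 1 0 : ℂ) * z + g 1 1)⁻¹ := by
  have hdet : (g 0 0 : ℂ) * g 1 1 - g 0 1 * g 1 0 = 1 := by
    exact_mod_cast (Matrix.det_fin_two _).symm.trans g.det_coe
  rw [moebiusZ]
  field_simp
  linear_combination hdet

lemma moebiusZ_image_inter_domainF_eq_empty {g : SL(2, ℤ)} (hg₁ : g ≠ 1) (hg₂ : g ≠ -1) :
    moebiusZ g '' domainF ∩ domainF = ∅ := by
  refine Set.eq_empty_of_forall_notMem ?_
  rintro _ ⟨⟨z, hz, rfl⟩, hw⟩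
  by_cases hc : g 1 0 = 0
  · obtain ⟨n, rfl | rfl⟩ := exists_eq_T_zpow_or_neg_of_c_eq_zero hc
    · rw [moebiusZ_T_zpow] at hw
      exact hg₁ (by rw [eq_zero_of_add_intCast_mem_domainF hz hw, zpow_zero])
    · rw [moebiusZ_neg, moebiusZ_T_zpow] at hw
      exact hg₂ (by rw [eq_zero_of_add_intCast_mem_domainF hz hw, zpow_zero])
  · have hden := one_lt_norm_intCast_mul_add hz hc (g 1 1)
    have hden' := one_lt_norm_intCast_mul_add hw (neg_ne_zero.mpr hc) (g 0 0)
    rw [Int.cast_neg, neg_mul_moebiusZ_add (norm_pos_iff.mp (one_pos.trans hden)), norm_inv]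
      at hden'
    exact (inv_lt_one_of_one_lt₀ hden).not_gt hden'

lemma moebiusZ_coe (g : SL(2, ℤ)) (τ : UpperHalfPlane) : moebiusZ g τ = ↑(g • τ) := by
  rw [UpperHalfPlane.coe_specialLinearGroup_apply]
  simp [moebiusZ]

lemma exists_smul_mem_closure_domainF_of_mem_fd {w : UpperHalfPlane} (hw : w ∈ fd) :
    ∃ h : SL(2, ℤ), ↑(h • w) ∈ closure domainF := by
  obtain ⟨hnorm, hre⟩ := hw
  rw [← UpperHalfPlane.coe_re, abs_le] at hre
  rw [normSq_apply, ← sq, ← sq] at hnorm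
  have him := w.coe_im_pos
  rcases le_or_gt 0 (w : ℂ).re with hw | hw
  · refine ⟨1, ?_⟩
    rw [one_smul]
    exact mem_closure_domainF him hw (by linarith) hnorm (by nlinarith)
  · refine ⟨T, ?_⟩
    rw [UpperHalfPlane.modular_T_smul, UpperHalfPlane.coe_vadd]
    apply mem_closure_domainF <;> simp only [add_re, add_im, ofReal_re, ofReal_im] <;> nlinarith

lemma exists_moebiusZ_mem_closure_domainF {z : ℂ} (hz : 0 < z.im) :
    ∃ g : SL(2, ℤ), moebiusZ g z ∈ closure domainF := by
  obtain ⟨g, hg⟩ := exists_smul_mem_fd ⟨z, hz⟩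
  obtain ⟨h, hh⟩ := exists_smul_mem_closure_domainF_of_mem_fd hg
  exact ⟨h * g, by rwa [← mul_smul, ← moebiusZ_coe] at hh⟩

end ModularStrip

/-- F = {z ∈ H : 0 < Re z < 1, |z| > 1, |z-1| > 1} is a fundamental
domain for PSL(2,ℤ) on H: it is open and connected, g·F ∩ F = ∅ for every element of
SL(2,ℤ) not representing the identity of PSL(2,ℤ) (i.e. g ≠ ±1), and every point of H
lies in some PSL(2,ℤ)-translate of the closure of F. -/
theorem F_fundamental_domain_PSL2Z :
    IsOpen {z : ℂ | 0 < z.im ∧ 0 < z.re ∧ z.re < 1 ∧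
        1 < ‖z‖ ∧ 1 < ‖z - 1‖} ∧
    IsConnected {z : ℂ | 0 < z.im ∧ 0 < z.re ∧ z.re < 1 ∧
        1 < ‖z‖ ∧ 1 < ‖z - 1‖} ∧
    (∀ g : Matrix.SpecialLinearGroup (Fin 2) ℤ, g ≠ 1 → g ≠ -1 →
      (moebiusZ g '' {z : ℂ | 0 < z.im ∧ 0 < z.re ∧ z.re < 1 ∧
          1 < ‖z‖ ∧ 1 < ‖z - 1‖}) ∩
        {z : ℂ | 0 < z.im ∧ 0 < z.re ∧ z.re < 1 ∧
          1 < ‖z‖ ∧ 1 < ‖z - 1‖} = ∅) ∧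
    (∀ z : ℂ, 0 < z.im → ∃ g : Matrix.SpecialLinearGroup (Fin 2) ℤ,
      moebiusZ g z ∈ closure {z : ℂ | 0 < z.im ∧ 0 < z.re ∧ z.re < 1 ∧
        1 < ‖z‖ ∧ 1 < ‖z - 1‖}) :=
  ⟨ModularStrip.isOpen_domainF, ModularStrip.isConnected_domainF,
    fun _ ↦ ModularStrip.moebiusZ_image_inter_domainF_eq_empty,
    fun _ ↦ ModularStrip.exists_moebiusZ_mem_closure_domainF⟩
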